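/- arXiv:1902.04225 — 2 statements merged into one kernel-verified Lean document; each statement's English description precedes it below -/
import Mathlib

section
/- Let X be a complex vector subspace of the space of holomorphic functions on 𝔻, equipped with a norm ‖·‖_X making X a Banach space, such that convergence in the norm of X implies locally uniform convergence on 𝔻. Suppose there exist a bounded, non-constant function h ∈ X with h(0) = 0, and a sequence (φₙ)_{n≥1} of holomorphic automorphisms of 𝔻, such that h∘φₙ ∈ X for all n and ‖h∘φₙ‖_X → 0 as n → ∞. Then there exists f ∈ X with f(𝔻) = ℂ. -/
/-!
Evaluation at the points of a compact set `K ⊆ 𝔻` is a pointwise bounded family of continuous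
functionals on `X`, so by Banach–Steinhaus `|f| ≤ C_K ‖f‖` on `K`. As `h` is non-constant with
`h 0 = 0`, there is a circle `|z| = r` on which `|h| ≥ m > 0`.

Put `f = ∑ c_k • h ∘ φ_{n_k}`, where `c_k = (A + 2)^k` outgrows `A` times its partial sums
(`A = 2 sup |h| / m`) and `n_k` is taken so large that the tail of the series after `k` is
at most `1` on the compact set `φ_{n_k}⁻¹ (closedBall 0 r)`.
Given `w`, choose `k` large. On `U = φ_{n_k}⁻¹ (ball 0 r)`, `f` is within
`sup |h| · ∑_{j<k} c_j + 1` of `c_k · h ∘ φ_{n_k}`, which vanishes at `φ_{n_k}⁻¹ 0` and has modulus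
at least `c_k m` on `∂U`. The minimum modulus principle then gives a solution of `f = w` in `U`.
-/

open Complex Metric Set Filter Topology

theorem Complex.exists_mem_closure_eq_of_norm_sub_lt {E : Type*} [NormedAddCommGroup E]
    [NormedSpace ℂ E] [Nontrivial E] {U : Set E} (hU : Bornology.IsBounded U) {F : E → ℂ}
    (hF : DiffContOnCl ℂ F U) {z₀ : E} (hz₀ : z₀ ∈ U) {w : ℂ} {m : ℝ}
    (hm : ∀ z ∈ frontier U, m ≤ ‖F z - w‖) (hz₀m : ‖F z₀ - w‖ < m) :
    ∃ z ∈ closure U, F z = w := by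
  by_contra! hne
  have hne' : ∀ z ∈ closure U, F z - w ≠ 0 := fun z hz => sub_ne_zero.mpr (hne z hz)
  have hm0 : 0 < m := (norm_nonneg _).trans_lt hz₀m
  -- maximum modulus principle for `(F - w)⁻¹`
  have hinv : DiffContOnCl ℂ (fun z => (F z - w)⁻¹) U :=
    ⟨(hF.differentiableOn.sub_const w).inv fun z hz => hne' z (subset_closure hz),
      (hF.continuousOn.sub continuousOn_const).inv₀ hne'⟩
  have hle := Complex.norm_le_of_forall_mem_frontier_norm_le hU hinv
    (fun z hz => by rw [norm_inv]; exact inv_anti₀ hm0 (hm z hz)) (subset_closure hz₀)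
  rw [norm_inv, inv_le_inv₀ (norm_pos_iff.mpr (hne' z₀ (subset_closure hz₀))) hm0] at hle
  exact hle.not_gt hz₀m

theorem Complex.exists_mem_closure_eq_of_norm_sub_le {E : Type*} [NormedAddCommGroup E]
    [NormedSpace ℂ E] [Nontrivial E] {U : Set E} (hU : Bornology.IsBounded U) {F P : E → ℂ}
    (hF : DiffContOnCl ℂ F U) {z₀ : E} (hz₀ : z₀ ∈ U) {w : ℂ} {m D : ℝ}
    (hFP : ∀ z ∈ closure U, ‖F z - P z‖ ≤ D) (hm : ∀ z ∈ frontier U, m ≤ ‖P z - w‖)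
    (hz₀m : ‖P z₀ - w‖ + 2 * D < m) : ∃ z ∈ closure U, F z = w := by
  refine Complex.exists_mem_closure_eq_of_norm_sub_lt hU hF hz₀ (m := m - D) (fun z hz => ?_) ?_
  · have := norm_sub_le_norm_sub_add_norm_sub (P z) (F z) w
    rw [norm_sub_rev (P z) (F z)] at this
    linarith [hm z hz, hFP z (frontier_subset_closure hz)]
  · linarith [norm_sub_le_norm_sub_add_norm_sub (F z₀) (P z₀) w, hFP z₀ (subset_closure hz₀)]

theorem ContinuousOn.mem_frontier_of_mem_frontier_inter_preimage {X Y : Type*}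
    [TopologicalSpace X] [TopologicalSpace Y] {f : X → Y} {s : Set X} {t : Set Y}
    (hs : IsOpen s) (ht : IsOpen t) (hf : ContinuousOn f s) (hcl : closure (s ∩ f ⁻¹' t) ⊆ s)
    {z : X} (hz : z ∈ frontier (s ∩ f ⁻¹' t)) : f z ∈ frontier t := by
  rw [(hf.isOpen_inter_preimage hs ht).frontier_eq] at hz
  obtain ⟨hzcl, hzU⟩ := hz
  rw [ht.frontier_eq]
  refine ⟨?_, fun hzt => hzU ⟨hcl hzcl, hzt⟩⟩
  have := (hf.mono hcl).image_closure ⟨z, hzcl, rfl⟩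
  exact closure_mono (image_preimage_subset f t |>.trans' (image_mono inter_subset_right)) this

theorem AnalyticOnNhd.exists_sphere_le_norm_sub {f : ℂ → ℂ} {U : Set ℂ} (hf : AnalyticOnNhd ℂ f U)
    (hU : IsPreconnected U) (hUo : IsOpen U) {z₀ : ℂ} (hz₀ : z₀ ∈ U)
    (hnc : ¬ EqOn f (fun _ => f z₀) U) :
    ∃ r > 0, closedBall z₀ r ⊆ U ∧ ∃ m > 0, ∀ z ∈ sphere z₀ r, m ≤ ‖f z - f z₀‖ := by
  have hne : ∀ᶠ z in 𝓝[≠] z₀, f z ≠ f z₀ :=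
    ((hf z₀ hz₀).eventually_eq_or_eventually_ne analyticAt_const).resolve_left
      fun hev => hnc (hf.eqOn_of_preconnected_of_eventuallyEq analyticOnNhd_const hU hz₀ hev)
  obtain ⟨ε, hε, hball⟩ := Metric.eventually_nhds_iff_ball.mp
    ((hUo.eventually_mem hz₀).and (eventually_nhdsWithin_iff.mp hne))
  have hsub : closedBall z₀ (ε / 2) ⊆ ball z₀ ε := closedBall_subset_ball (by linarith)
  have hsph : ∀ z ∈ sphere z₀ (ε / 2), f z - f z₀ ≠ 0 := fun z hz =>
    sub_ne_zero.mpr ((hball z (hsub (sphere_subset_closedBall hz))).2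
      (ne_of_mem_sphere hz (by positivity)))
  obtain ⟨zm, hzm, hmin⟩ := (isCompact_sphere z₀ (ε / 2)).exists_isMinOn
    (NormedSpace.sphere_nonempty.mpr (by positivity))
    ((hf.continuousOn.mono fun z hz => (hball z (hsub (sphere_subset_closedBall hz))).1).sub
      continuousOn_const).norm
  exact ⟨ε / 2, by positivity, fun z hz => (hball z (hsub hz)).1, _, norm_pos_iff.mpr (hsph zm hzm),
    fun z hz => hmin hz⟩

theorem exists_lt_one_inter_preimage_subset_closedBall {φ : ℂ → ℂ}
    (hd : DifferentiableOn ℂ φ (ball 0 1)) (hinj : InjOn φ (ball 0 1)) {K : Set ℂ}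
    (hK : IsCompact K) (hKφ : K ⊆ φ '' ball 0 1) :
    ∃ R < 1, ball 0 1 ∩ φ ⁻¹' K ⊆ closedBall 0 R := by
  have hopen : ∀ s ⊆ ball (0 : ℂ) 1, IsOpen s → IsOpen (φ '' s) := by
    refine ((hd.analyticOnNhd isOpen_ball).is_constant_or_isOpen
      (convex_ball 0 1).isPreconnected).resolve_left ?_
    rintro ⟨c, hc⟩
    have h0 : (0 : ℂ) ∈ ball (0 : ℂ) 1 := mem_ball_self one_pos
    have h2 : (2⁻¹ : ℂ) ∈ ball (0 : ℂ) 1 := by simp [norm_inv]; norm_num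
    exact absurd (hinj h0 h2 ((hc 0 h0).trans (hc _ h2).symm)) (by norm_num)
  obtain ⟨R, hR⟩ := hK.elim_directed_cover (fun R : Iio (1 : ℝ) => φ '' ball 0 R.1)
    (fun R => hopen _ (ball_subset_ball R.2.le) isOpen_ball)
    (fun q hq => by
      obtain ⟨z, hz, rfl⟩ := hKφ hq
      obtain ⟨R, hzR, hR1⟩ := exists_between (mem_ball_zero_iff.mp hz)
      exact mem_iUnion.mpr ⟨⟨R, hR1⟩, z, mem_ball_zero_iff.mpr hzR, rfl⟩)
    (Monotone.directed_le fun R R' h => image_mono (ball_subset_ball h))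
  refine ⟨R.1, R.2, fun z ⟨hz, hzK⟩ => ?_⟩
  obtain ⟨z', hz', hzz'⟩ := hR hzK
  rw [← hinj (ball_subset_ball R.2.le hz') hz hzz']
  exact ball_subset_closedBall hz'

theorem exists_mem_ball_eq_of_norm_sub_mul_comp_le {F ψ g : ℂ → ℂ} {r R m c D : ℝ} {w : ℂ}
    (hF : DifferentiableOn ℂ F (ball 0 1)) (hψ : ContinuousOn ψ (ball 0 1))
    (hψ0 : ∃ z ∈ ball (0 : ℂ) 1, ψ z = 0) (hR : R < 1)
    (hψR : ball 0 1 ∩ ψ ⁻¹' closedBall 0 r ⊆ closedBall 0 R) (hr : 0 < r) (hg0 : g 0 = 0)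
    (hgm : ∀ z ∈ sphere 0 r, m ≤ ‖g z‖) (hc : 0 ≤ c)
    (hFg : ∀ z ∈ closedBall 0 R, ‖F z - c * g (ψ z)‖ ≤ D) (hw : 2 * ‖w‖ + 2 * D < c * m) :
    ∃ z ∈ ball 0 1, F z = w := by
  set U := ball 0 1 ∩ ψ ⁻¹' ball 0 r
  have hUR : closure U ⊆ closedBall 0 R := closure_minimal
    ((inter_subset_inter_right _ (preimage_mono ball_subset_closedBall)).trans hψR)
    isClosed_closedBall
  have hRD : closedBall (0 : ℂ) R ⊆ ball 0 1 := closedBall_subset_ball hR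
  obtain ⟨z₀, hz₀, hψz₀⟩ := hψ0
  have hz₀U : z₀ ∈ U := ⟨hz₀, by simp [hψz₀, hr]⟩
  have hfront : ∀ z ∈ frontier U, c * m - ‖w‖ ≤ ‖c * g (ψ z) - w‖ := fun z hz => by
    have hψz := hψ.mem_frontier_of_mem_frontier_inter_preimage isOpen_ball isOpen_ball
      (hUR.trans hRD) hz
    rw [frontier_ball 0 hr.ne'] at hψz
    have := norm_sub_norm_le (c * g (ψ z)) w
    rw [norm_mul, Complex.norm_real, Real.norm_of_nonneg hc] at this
    nlinarith [hgm _ hψz]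
  obtain ⟨z, hz, hFz⟩ := Complex.exists_mem_closure_eq_of_norm_sub_le
    (isBounded_ball.subset inter_subset_left)
    ⟨hF.mono inter_subset_left, hF.continuousOn.mono (hUR.trans hRD)⟩ hz₀U
    (fun z hz => hFg z (hUR hz)) hfront (by simp [hψz₀, hg0]; linarith)
  exact ⟨z, hRD (hUR hz), hFz⟩

theorem continuous_apply_of_tendstoLocallyUniformlyOn {E X F : Type*} [TopologicalSpace E]
    [FirstCountableTopology E] [TopologicalSpace X] [UniformSpace F] {ι : E → X → F} {U : Set X}
    (hconv : ∀ (u : ℕ → E) (x : E), Tendsto u atTop (𝓝 x) →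
      TendstoLocallyUniformlyOn (fun n => ι (u n)) (ι x) atTop U)
    {z : X} (hz : z ∈ U) : Continuous fun x => ι x z :=
  SeqContinuous.continuous fun u x hu => (hconv u x hu).tendsto_at hz

theorem exists_norm_apply_le_mul_norm {𝕜 E F X : Type*} [NontriviallyNormedField 𝕜]
    [NormedAddCommGroup E] [NormedSpace 𝕜 E] [CompleteSpace E] [NormedAddCommGroup F]
    [NormedSpace 𝕜 F] [TopologicalSpace X] (ι : E →ₗ[𝕜] X → F) {K : Set X} (hK : IsCompact K)
    (hcont : ∀ x, ContinuousOn (ι x) K) (heval : ∀ z ∈ K, Continuous fun x => ι x z) :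
    ∃ C, 0 ≤ C ∧ ∀ x, ∀ z ∈ K, ‖ι x z‖ ≤ C * ‖x‖ := by
  let g : K → E →L[𝕜] F := fun z => ⟨(LinearMap.proj z.1).comp ι, heval z z.2⟩
  obtain ⟨C, hC⟩ := banach_steinhaus (g := g) fun x => by
    obtain ⟨C, hC⟩ := hK.exists_bound_of_continuousOn (hcont x)
    exact ⟨C, fun z => hC z z.2⟩
  exact ⟨max C 0, le_max_right _ _, fun x z hz =>
    (g ⟨z, hz⟩).le_of_opNorm_le ((hC _).trans (le_max_left _ _)) x⟩

theorem exists_pos_seq_eventually_mul_sum_add_lt {A : ℝ} (hA : 0 ≤ A) :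
    ∃ c : ℕ → ℝ, (∀ k, 0 < c k) ∧ ∀ B, ∀ᶠ k in atTop, A * ∑ j ∈ Finset.range k, c j + B < c k := by
  refine ⟨fun k => (A + 2) ^ k, fun k => by positivity, fun B => ?_⟩
  filter_upwards [eventually_gt_atTop ⌈B⌉₊] with k hk
  -- `(A + 2) ^ k - 1 = (A + 1) * S` and `k ≤ S` for the partial sum `S` of the powers
  have hgeom := geom_sum_mul (A + 2) k
  have hk_le : (k : ℝ) ≤ ∑ j ∈ Finset.range k, (A + 2) ^ j := by
    simpa using Finset.card_nsmul_le_sum (Finset.range k) (fun j => (A + 2) ^ j) 1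
      fun j _ => one_le_pow₀ (by linarith)
  have hB : B < k := (Nat.le_ceil B).trans_lt (by exact_mod_cast hk)
  nlinarith

theorem exists_seq_norm_le {E : Type*} [SeminormedAddCommGroup E] {e : ℕ → E}
    (he : Tendsto (fun n => ‖e n‖) atTop (𝓝 0)) (B : ℕ → ℝ) {ε : ℕ → ℝ} (hε : ∀ j, 0 < ε j) :
    ∃ n : ℕ → ℕ, ∀ j, ‖e (n j)‖ ≤ ε j ∧ ∀ k < j, B (n k) * ‖e (n j)‖ ≤ ε j := by
  choose! N hN using fun δ (hδ : 0 < δ) => (he.eventually (ge_mem_nhds hδ)).exists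
  -- `μ j` dominates `1` and the weights `B (n k)` of the earlier indices `k < j`
  let μ : ℕ → ℝ := fun j => Nat.rec 1 (fun j μj => max μj (B (N (ε j / μj)))) j
  have hμ1 : ∀ j, 1 ≤ μ j := fun j => by
    induction j with
    | zero => exact le_rfl
    | succ j ih => exact ih.trans (le_max_left _ _)
  have hμmono : Monotone μ := monotone_nat_of_le_succ fun j => le_max_left _ _
  have hμB : ∀ {j}, ∀ k < j, B (N (ε k / μ k)) ≤ μ j := fun k hk =>
    (le_max_right _ _).trans (hμmono hk)
  refine ⟨fun j => N (ε j / μ j), fun j => ?_⟩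
  have hj := hN _ (div_pos (hε j) (zero_lt_one.trans_le (hμ1 j)))
  rw [le_div_iff₀' (zero_lt_one.trans_le (hμ1 j))] at hj
  exact ⟨(le_mul_of_one_le_left (norm_nonneg _) (hμ1 j)).trans hj, fun k hk =>
    (mul_le_mul_of_nonneg_right (hμB k hk) (norm_nonneg _)).trans hj⟩

theorem norm_tsum_nat_add_le {E : Type*} [NormedAddCommGroup E] {u : ℕ → E} {B : ℝ} (hB : 0 ≤ B)
    (k : ℕ) (hu : ∀ j, k < j → B * ‖u j‖ ≤ 2⁻¹ ^ j) : B * ‖∑' j, u (j + (k + 1))‖ ≤ 2⁻¹ ^ k := by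
  rcases hB.eq_or_lt with rfl | hB
  · simp
  have hgeom : HasSum (fun j : ℕ => 2⁻¹ ^ (j + (k + 1)) / B) (2⁻¹ ^ k / B) := by
    have h := ((hasSum_geometric_of_lt_one (r := (2⁻¹ : ℝ)) (by norm_num) (by norm_num)).mul_left
      (2⁻¹ ^ (k + 1))).div_const B
    rwa [show 2⁻¹ ^ (k + 1) * (1 - 2⁻¹)⁻¹ = (2⁻¹ : ℝ) ^ k by rw [pow_succ, mul_assoc]; norm_num,
      show (fun j => 2⁻¹ ^ (k + 1) * 2⁻¹ ^ j / B) = fun j : ℕ => (2⁻¹ : ℝ) ^ (j + (k + 1)) / B by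
        ext j; ring] at h
  rw [← le_div_iff₀' hB]
  exact tsum_of_norm_bounded hgeom fun j => by
    rw [le_div_iff₀' hB]; exact hu _ (by omega)

theorem norm_apply_tsum_smul_sub_le {E X : Type*} [NormedAddCommGroup E] [NormedSpace ℂ E]
    [CompleteSpace E] (ι : E →ₗ[ℂ] X → ℂ) {c : ℕ → ℝ} (hc : ∀ j, 0 < c j) {v : ℕ → E}
    (hv : ∀ j, ‖v j‖ ≤ 2⁻¹ ^ j / c j) (k : ℕ) {z : X} {Cb B : ℝ} (hB : 0 ≤ B)
    (hhead : ∀ j < k, ‖ι (v j) z‖ ≤ Cb) (heval : ∀ y, ‖ι y z‖ ≤ B * ‖y‖)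
    (htail : ∀ j, k < j → B * ‖v j‖ ≤ 2⁻¹ ^ j / c j) :
    ‖ι (∑' j, (c j : ℂ) • v j) z - c k * ι (v k) z‖ ≤ Cb * ∑ j ∈ Finset.range k, c j + 1 := by
  have hnorm : ∀ j, ‖(c j : ℂ) • v j‖ = c j * ‖v j‖ := fun j => by
    rw [norm_smul, Complex.norm_real, Real.norm_of_nonneg (hc j).le]
  have hs : Summable fun j => (c j : ℂ) • v j :=
    .of_norm_bounded (summable_geometric_of_lt_one (r := (2⁻¹ : ℝ)) (by norm_num) (by norm_num))
      fun j => by rw [hnorm, ← le_div_iff₀' (hc j)]; exact hv j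
  have hsplit : ι (∑' j, (c j : ℂ) • v j) z - c k * ι (v k) z = ∑ j ∈ Finset.range k,
      c j * ι (v j) z + ι (∑' j, (c (j + (k + 1)) : ℂ) • v (j + (k + 1))) z := by
    rw [← hs.sum_add_tsum_nat_add (k + 1), Finset.sum_range_succ]
    simp only [map_add, map_sum, map_smul, Pi.add_apply, Finset.sum_apply, Pi.smul_apply,
      smul_eq_mul]
    ring
  have hheadsum : ‖∑ j ∈ Finset.range k, c j * ι (v j) z‖ ≤ Cb * ∑ j ∈ Finset.range k, c j := by
    rw [Finset.mul_sum]
    refine (norm_sum_le _ _).trans (Finset.sum_le_sum fun j hj => ?_)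
    rw [norm_mul, Complex.norm_real, Real.norm_of_nonneg (hc j).le, mul_comm]
    exact mul_le_mul_of_nonneg_right (hhead j (Finset.mem_range.mp hj)) (hc j).le
  have htailsum := norm_tsum_nat_add_le hB k (u := fun j => (c j : ℂ) • v j) fun j hj => by
    rw [hnorm, mul_left_comm, ← le_div_iff₀' (hc j)]; exact htail j hj
  rw [hsplit]
  refine (norm_add_le _ _).trans (add_le_add hheadsum ((heval _).trans (htailsum.trans ?_)))
  exact pow_le_one₀ (by norm_num) (by norm_num)

theorem surjective_function_exists_general
    {E : Type*} [NormedAddCommGroup E] [NormedSpace ℂ E] [CompleteSpace E]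
    (ι : E →ₗ[ℂ] (ℂ → ℂ))
    (hhol : ∀ x : E, DifferentiableOn ℂ (ι x) (Metric.ball 0 1))
    (hconv : ∀ (u : ℕ → E) (x : E), Filter.Tendsto u Filter.atTop (nhds x) →
      TendstoLocallyUniformlyOn (fun n => ι (u n)) (ι x) Filter.atTop (Metric.ball 0 1))
    (h : E)
    (hbdd : ∃ C : ℝ, ∀ z ∈ Metric.ball (0 : ℂ) 1, ‖ι h z‖ ≤ C)
    (hnc : ¬ ∃ c : ℂ, ∀ z ∈ Metric.ball (0 : ℂ) 1, ι h z = c)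
    (h0 : ι h 0 = 0)
    (φ : ℕ → ℂ → ℂ)
    (hφ : ∀ n, DifferentiableOn ℂ (φ n) (Metric.ball 0 1) ∧
      Set.BijOn (φ n) (Metric.ball 0 1) (Metric.ball 0 1))
    (e : ℕ → E)
    (he : ∀ n, Set.EqOn (ι (e n)) (fun z => ι h (φ n z)) (Metric.ball 0 1))
    (hlim : Filter.Tendsto (fun n => ‖e n‖) Filter.atTop (nhds 0)) :
    ∃ f : E, (ι f) '' Metric.ball 0 1 = Set.univ := by
  obtain ⟨Cb, hCb⟩ := hbdd
  have hCb0 : 0 ≤ Cb := (norm_nonneg _).trans (hCb 0 (mem_ball_self one_pos))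
  obtain ⟨r, hr, hrD, m, hm, hhm⟩ := ((hhol h).analyticOnNhd isOpen_ball).exists_sphere_le_norm_sub
    (convex_ball 0 1).isPreconnected isOpen_ball (mem_ball_self one_pos) fun hc => hnc ⟨_, hc⟩
  simp only [h0, sub_zero] at hhm
  choose R hR1 hR using fun n => exists_lt_one_inter_preimage_subset_closedBall (hφ n).1
    (hφ n).2.injOn (isCompact_closedBall 0 r) (hrD.trans (hφ n).2.image_eq.superset)
  choose C hC0 hC using fun n => exists_norm_apply_le_mul_norm ι (isCompact_closedBall 0 (R n))
    (fun x => (hhol x).continuousOn.mono (closedBall_subset_ball (hR1 n)))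
    fun z hz => continuous_apply_of_tendstoLocallyUniformlyOn hconv
      (closedBall_subset_ball (hR1 n) hz)
  obtain ⟨c, hc, hcS⟩ := exists_pos_seq_eventually_mul_sum_add_lt (A := 2 * Cb / m) (by positivity)
  obtain ⟨n, hn⟩ := exists_seq_norm_le hlim C (ε := fun j => 2⁻¹ ^ j / c j)
    fun j => div_pos (by positivity) (hc j)
  refine ⟨∑' j, (c j : ℂ) • e (n j), eq_univ_of_forall fun w => ?_⟩
  obtain ⟨k, hk⟩ := (hcS ((2 * ‖w‖ + 2) / m)).exists
  rw [div_mul_eq_mul_div, ← add_div, div_lt_iff₀ hm] at hk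
  refine exists_mem_ball_eq_of_norm_sub_mul_comp_le (D := Cb * ∑ j ∈ Finset.range k, c j + 1)
    (hhol _) (hφ (n k)).1.continuousOn ((hφ (n k)).2.surjOn (mem_ball_self one_pos)) (hR1 (n k))
    (hR (n k)) hr h0 hhm (hc k).le (fun z hz => ?_) (by linarith)
  have hzD := closedBall_subset_ball (hR1 (n k)) hz
  rw [show ι h (φ (n k) z) = ι (e (n k)) z from (he (n k) hzD).symm]
  exact norm_apply_tsum_smul_sub_le ι hc (fun j => (hn j).1) k (hC0 (n k))
    (fun j _ => he (n j) hzD ▸ hCb _ ((hφ (n j)).2.mapsTo hzD)) (fun y => hC (n k) y z hz)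
    fun j hkj => (hn j).2 k hkj

/-- Surjectivity lemma: let `X` be a Banach space of holomorphic functions on
the unit disk (modelled as an abstract complex Banach space `E` together with a
linear embedding `ι` into functions, injective up to equality on `𝔻`, whose
values are holomorphic on `𝔻`), in which norm convergence implies locally
uniform convergence on `𝔻`.  If there is a bounded non-constant `h ∈ X` with
`h(0) = 0` and holomorphic automorphisms `φₙ` of `𝔻` with `h∘φₙ ∈ X` and
`‖h∘φₙ‖_X → 0`, then `X` contains a function mapping `𝔻` onto `ℂ`. -/
theorem surjective_function_exists
    {E : Type*} [NormedAddCommGroup E] [NormedSpace ℂ E] [CompleteSpace E]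
    (ι : E →ₗ[ℂ] (ℂ → ℂ))
    (hinj : ∀ x y : E, Set.EqOn (ι x) (ι y) (Metric.ball 0 1) → x = y)
    (hhol : ∀ x : E, DifferentiableOn ℂ (ι x) (Metric.ball 0 1))
    (hconv : ∀ (u : ℕ → E) (x : E), Filter.Tendsto u Filter.atTop (nhds x) →
      TendstoLocallyUniformlyOn (fun n => ι (u n)) (ι x) Filter.atTop (Metric.ball 0 1))
    (h : E)
    (hbdd : ∃ C : ℝ, ∀ z ∈ Metric.ball (0 : ℂ) 1, ‖ι h z‖ ≤ C)
    (hnc : ¬ ∃ c : ℂ, ∀ z ∈ Metric.ball (0 : ℂ) 1, ι h z = c)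
    (h0 : ι h 0 = 0)
    (φ : ℕ → ℂ → ℂ)
    (hφ : ∀ n, DifferentiableOn ℂ (φ n) (Metric.ball 0 1) ∧
      Set.BijOn (φ n) (Metric.ball 0 1) (Metric.ball 0 1))
    (e : ℕ → E)
    (he : ∀ n, Set.EqOn (ι (e n)) (fun z => ι h (φ n z)) (Metric.ball 0 1))
    (hlim : Filter.Tendsto (fun n => ‖e n‖) Filter.atTop (nhds 0)) :
    ∃ f : E, (ι f) '' Metric.ball 0 1 = Set.univ :=
  surjective_function_exists_general ι hhol hconv h hbdd hnc h0 φ hφ e he hlim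
end

section
/- Every function f in the Dirichlet space 𝒟 can be written as f = g₁ + g₂, where g₁, g₂ ∈ 𝒟 and neither g₁ nor g₂ has a zero in 𝔻. -/
open Complex MeasureTheory Metric Set

/-- Membership in the Dirichlet space `𝒟`: `f` is holomorphic on the open unit
disk and its Dirichlet integral `(1/π)∫_𝔻 |f′|² dA` is finite (equivalently,
`|f′|²` is integrable on the disk). -/
def MemDirichlet (f : ℂ → ℂ) : Prop :=
  DifferentiableOn ℂ f (Metric.ball 0 1) ∧
    MeasureTheory.IntegrableOn (fun z => ‖deriv f z‖ ^ 2) (Metric.ball 0 1)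

/-!
The area formula bounds the area of `f(𝔻)`, counted without multiplicity, by the Dirichlet
integral `∫_𝔻 |f′|²`, since `|f′|²` is the real Jacobian of `f`. So `f(𝔻)` has finite area and
`f` omits some value `c ≠ 0`; then `f = (f - c) + c` with both summands zero-free on `𝔻`.
-/

theorem Complex.det_restrictScalars_toSpanSingleton (c : ℂ) :
    ((ContinuousLinearMap.toSpanSingleton ℂ c).restrictScalars ℝ).det = normSq c := by
  have hmul : ((ContinuousLinearMap.toSpanSingleton ℂ c).restrictScalars ℝ : ℂ →ₗ[ℝ] ℂ) =
      Algebra.lmul ℝ ℂ c := by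
    ext z
    simp [mul_comm]
  rw [ContinuousLinearMap.det, hmul, ← Algebra.norm_apply, Algebra.norm_complex_apply]

theorem Complex.volume_image_le_lintegral_norm_sq {f f' : ℂ → ℂ} {s : Set ℂ}
    (hs : MeasurableSet s) (hf' : ∀ x ∈ s, HasDerivWithinAt f (f' x) s x) :
    volume (f '' s) ≤ ∫⁻ x in s, ENNReal.ofReal (‖f' x‖ ^ 2) := by
  have hf'ℝ : ∀ x ∈ s, HasFDerivWithinAt f
      ((ContinuousLinearMap.toSpanSingleton ℂ (f' x)).restrictScalars ℝ) s x :=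
    fun x hx => (hf' x hx).hasFDerivWithinAt.restrictScalars ℝ
  calc volume (f '' s)
      ≤ ∫⁻ x in s, ENNReal.ofReal
          |((ContinuousLinearMap.toSpanSingleton ℂ (f' x)).restrictScalars ℝ).det| :=
        addHaar_image_le_lintegral_abs_det_fderiv volume hs hf'ℝ
    _ = ∫⁻ x in s, ENNReal.ofReal (‖f' x‖ ^ 2) := by
        simp only [det_restrictScalars_toSpanSingleton, normSq_eq_norm_sq, abs_sq]

theorem Complex.volume_image_lt_top_of_integrableOn_norm_sq {f f' : ℂ → ℂ} {s : Set ℂ}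
    (hs : MeasurableSet s) (hf' : ∀ x ∈ s, HasDerivWithinAt f (f' x) s x)
    (hint : IntegrableOn (fun x => ‖f' x‖ ^ 2) s) :
    volume (f '' s) < ⊤ :=
  (volume_image_le_lintegral_norm_sq hs hf').trans_lt hint.lintegral_lt_top

theorem MeasureTheory.Measure.exists_ne_notMem_of_ne_top {α : Type*} [MeasurableSpace α]
    {μ : Measure α} [NullSingletonClass μ] (hμ : μ univ = ⊤) {t : Set α} (ht : μ t ≠ ⊤) (a : α) :
    ∃ c, c ≠ a ∧ c ∉ t := by
  have hne : insert a t ≠ univ := by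
    intro h
    rw [← measure_congr (insert_ae_eq_self a t), h] at ht
    exact ht hμ
  obtain ⟨c, hc⟩ := (ne_univ_iff_exists_notMem _).1 hne
  exact ⟨c, fun h => hc (h ▸ mem_insert c t), fun h => hc (mem_insert_of_mem a h)⟩

namespace MemDirichlet

variable {f : ℂ → ℂ}

theorem volume_image_lt_top (hf : MemDirichlet f) : volume (f '' ball 0 1) < ⊤ :=
  volume_image_lt_top_of_integrableOn_norm_sq measurableSet_ball
    (fun _ hx =>
      ((hf.1 _ hx).differentiableAt (isOpen_ball.mem_nhds hx)).hasDerivAt.hasDerivWithinAt)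
    hf.2

theorem sub_const (hf : MemDirichlet f) (c : ℂ) : MemDirichlet (fun z => f z - c) := by
  refine ⟨hf.1.sub_const c, ?_⟩
  simpa only [deriv_sub_const] using hf.2

end MemDirichlet

theorem memDirichlet_const (c : ℂ) : MemDirichlet (fun _ => c) := by
  refine ⟨differentiableOn_const c, ?_⟩
  simp only [deriv_const', norm_zero]
  exact integrableOn_const (measure_ball_lt_top).ne

/-- Every function in the Dirichlet space is the sum of two functions in the
Dirichlet space, neither of which has a zero in the unit disk. -/
theorem dirichlet_sum_of_two_nonvanishing (f : ℂ → ℂ) (hf : MemDirichlet f) :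
    ∃ g₁ g₂ : ℂ → ℂ, MemDirichlet g₁ ∧ MemDirichlet g₂ ∧
      (∀ z ∈ Metric.ball (0 : ℂ) 1, g₁ z ≠ 0) ∧
      (∀ z ∈ Metric.ball (0 : ℂ) 1, g₂ z ≠ 0) ∧
      (∀ z ∈ Metric.ball (0 : ℂ) 1, f z = g₁ z + g₂ z) := by
  obtain ⟨c, hc₀, hc⟩ := Measure.exists_ne_notMem_of_ne_top
    (measure_univ_of_isAddLeftInvariant volume) hf.volume_image_lt_top.ne 0
  refine ⟨fun z => f z - c, fun _ => c, hf.sub_const c, memDirichlet_const c,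
    fun z hz hfz => hc ⟨z, hz, sub_eq_zero.1 hfz⟩, fun _ _ => hc₀, fun z _ => ?_⟩
  exact (sub_add_cancel (f z) c).symm
end
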